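/- For all integers n, k, r with n ≥ k ≥ r ≥ 2, f(n,k,r) ≥ (C(n, r−1) / C(k−2, r−2)) · (n − k + 2) / (r(n − r + 2)), where C(a,b) denotes the binomial coefficient. -/

import Mathlib

open Finset

namespace DC4
variable {n : ℕ} (F : Finset (Finset (Fin n)))
def Ind (A : Finset (Fin n)) : Prop := ∀ E ∈ F, ¬ E ⊆ A
instance : DecidablePred (Ind F) := fun _ => by unfold Ind; infer_instance
lemma Ind.mono {A B : Finset (Fin n)} (hAB : A ⊆ B) (hB : Ind F B) : Ind F A :=
  fun E hE hEA => hB E hE (hEA.trans hAB)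
def I (s : ℕ) : Finset (Finset (Fin n)) := (univ.powersetCard s).filter (Ind F)
def c (s : ℕ) : ℕ := (I F s).card
lemma mem_I {s : ℕ} {A : Finset (Fin n)} : A ∈ I F s ↔ A.card = s ∧ Ind F A := by
  simp [I, Finset.mem_powersetCard, subset_univ]
def ext (J : Finset (Fin n)) : Finset (Fin n) := (univ \ J).filter fun x => Ind F (insert x J)
def D (J : Finset (Fin n)) : ℕ := (ext F J).card
lemma mem_ext {J : Finset (Fin n)} {x : Fin n} :
    x ∈ ext F J ↔ x ∉ J ∧ Ind F (insert x J) := by simp [ext]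
def bext (J : Finset (Fin n)) : Finset (Fin n) :=
  (univ \ J).filter fun x => ¬ Ind F (insert x J)
def B (J : Finset (Fin n)) : ℕ := (bext F J).card
lemma mem_bext {J : Finset (Fin n)} {x : Fin n} :
    x ∈ bext F J ↔ x ∉ J ∧ ¬ Ind F (insert x J) := by simp [bext]
def TT (j : ℕ) : Finset ((_ : Finset (Fin n)) × (Fin n × Fin n)) :=
  (I F j).sigma fun J => (ext F J).offDiag
def TTgood (j : ℕ) : Finset ((_ : Finset (Fin n)) × (Fin n × Fin n)) :=
  (TT F j).filter fun p => Ind F (insert p.2.1 (insert p.2.2 p.1))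
def TTbad (j : ℕ) : Finset ((_ : Finset (Fin n)) × (Fin n × Fin n)) :=
  (TT F j).filter fun p => ¬ Ind F (insert p.2.1 (insert p.2.2 p.1))

lemma mem_TT {j : ℕ} {p : (_ : Finset (Fin n)) × (Fin n × Fin n)} :
    p ∈ TT F j ↔ p.1 ∈ I F j ∧ p.2.1 ∈ ext F p.1 ∧ p.2.2 ∈ ext F p.1 ∧ p.2.1 ≠ p.2.2 := by
  simp only [TT, Finset.mem_sigma, Finset.mem_offDiag]

lemma TTgood_card (j : ℕ) : (TTgood F j).card = (j+2) * (j+1) * c F (j+2) := by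
  have h2 : ((I F (j+2)).sigma fun W => W.offDiag).card = (j+2) * (j+1) * c F (j+2) := by
    rw [Finset.card_sigma]
    have hstep : ∀ W ∈ I F (j+2), W.offDiag.card = (j+2)*(j+1) := by
      intro W hW
      rw [Finset.offDiag_card, ((mem_I F).1 hW).1]
      have : (j+2)*(j+2) = (j+2)*(j+1) + (j+2) := by ring
      omega
    rw [Finset.sum_congr rfl hstep, Finset.sum_const, smul_eq_mul, c]
    ring
  rw [← h2]
  apply Finset.card_bij
    (fun p _ => (⟨insert p.2.1 (insert p.2.2 p.1), p.2⟩ : (_ : Finset (Fin n)) × (Fin n × Fin n)))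
  · rintro ⟨J, x, z⟩ hp
    simp only [TTgood, Finset.mem_filter] at hp
    obtain ⟨hTT, hI⟩ := hp
    rw [mem_TT] at hTT
    obtain ⟨hJ, hx, hz, hxz⟩ := hTT
    rw [mem_ext] at hx hz
    obtain ⟨hJc, hJi⟩ := (mem_I F).1 hJ
    have hxni : x ∉ insert z J := by simp [Finset.mem_insert, hxz, hx.1]
    simp only [Finset.mem_sigma]
    constructor
    · refine (mem_I F).2 ⟨?_, hI⟩
      rw [Finset.card_insert_of_notMem hxni, Finset.card_insert_of_notMem hz.1, hJc]
    · simp only [Finset.mem_offDiag]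
      refine ⟨Finset.mem_insert_self _ _, ?_, hxz⟩
      exact Finset.mem_insert_of_mem (Finset.mem_insert_self _ _)
  · rintro ⟨J, x, z⟩ hp ⟨J', x', z'⟩ hp' h
    simp only [TTgood, Finset.mem_filter, mem_TT, mem_ext] at hp hp'
    obtain ⟨h1, h2⟩ := Sigma.mk.inj_iff.1 h
    have hpair : x = x' ∧ z = z' := by
      have := h2
      simp only [heq_iff_eq, Prod.mk.injEq] at this
      exact ⟨this.1, this.2⟩
    obtain ⟨hx, hz⟩ := hpair
    subst hx; subst hz
    have hJJ : J = J' := by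
      have e1 : ((insert x (insert z J)).erase x).erase z = J := by
        rw [Finset.erase_insert (by simp [Finset.mem_insert, hp.1.2.2.2, hp.1.2.1.1])]
        exact Finset.erase_insert hp.1.2.2.1.1
      have e2 : ((insert x (insert z J')).erase x).erase z = J' := by
        rw [Finset.erase_insert (by simp [Finset.mem_insert, hp'.1.2.2.2, hp'.1.2.1.1])]
        exact Finset.erase_insert hp'.1.2.2.1.1
      rw [← e1, ← e2, h1]
    subst hJJ; rfl
  · rintro ⟨W, x, z⟩ hp
    simp only [Finset.mem_sigma, Finset.mem_offDiag] at hp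
    obtain ⟨hW, hxW, hzW, hxz⟩ := hp
    obtain ⟨hWc, hWi⟩ := (mem_I F).1 hW
    have hzex : z ∈ W.erase x := Finset.mem_erase.2 ⟨fun h => hxz h.symm, hzW⟩
    refine ⟨⟨(W.erase x).erase z, x, z⟩, ?_, ?_⟩
    · have hJc : ((W.erase x).erase z).card = j := by
        rw [Finset.card_erase_of_mem hzex, Finset.card_erase_of_mem hxW, hWc]
        omega
      have hiz : insert z ((W.erase x).erase z) = W.erase x := Finset.insert_erase hzex
      have hix : insert x ((W.erase x).erase z) = W.erase z := by
        rw [Finset.erase_right_comm]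
        exact Finset.insert_erase (Finset.mem_erase.2 ⟨hxz, hxW⟩)
      simp only [TTgood, Finset.mem_filter, mem_TT, mem_ext]
      refine ⟨⟨(mem_I F).2 ⟨hJc, Ind.mono F ((Finset.erase_subset _ _).trans (Finset.erase_subset _ _)) hWi⟩,
        ⟨?_, ?_⟩, ⟨?_, ?_⟩, hxz⟩, ?_⟩
      · simp [Finset.mem_erase]
      · rw [hix]; exact Ind.mono F (Finset.erase_subset _ _) hWi
      · exact Finset.notMem_erase _ _
      · rw [hiz]; exact Ind.mono F (Finset.erase_subset _ _) hWi
      · rw [hiz, Finset.insert_erase hxW]; exact hWi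
    · have hiz : insert z ((W.erase x).erase z) = W.erase x := Finset.insert_erase hzex
      simp only [hiz, Finset.insert_erase hxW]

noncomputable def pick (K : Finset (Fin n)) (x : Fin n) : Finset (Fin n) :=
  if h : ∃ E ∈ F, E ⊆ insert x K then h.choose else ∅

lemma not_ind_iff {A : Finset (Fin n)} : ¬ Ind F A ↔ ∃ E ∈ F, E ⊆ A := by
  unfold Ind; push_neg; rfl

lemma pick_spec {K : Finset (Fin n)} {x : Fin n} (h : ¬ Ind F (insert x K)) :
    pick F K x ∈ F ∧ pick F K x ⊆ insert x K := by
  rw [not_ind_iff] at h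
  rw [pick, dif_pos h]
  obtain ⟨h1, h2⟩ := h.choose_spec
  exact ⟨h1, h2⟩

lemma x_mem_pick {K : Finset (Fin n)} {x : Fin n} (hK : Ind F K)
    (h : ¬ Ind F (insert x K)) : x ∈ pick F K x := by
  by_contra hx
  have hsub : pick F K x ⊆ K :=
    (Finset.subset_insert_iff_of_notMem hx).1 (pick_spec F h).2
  exact hK _ (pick_spec F h).1 hsub

def PB (s : ℕ) : Finset ((_ : Finset (Fin n)) × Fin n) :=
  (I F s).sigma fun K => bext F K

lemma PB_card (s : ℕ) : (PB F s).card = ∑ K ∈ I F s, B F K := Finset.card_sigma _ _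

noncomputable def Tgt (j : ℕ) : Finset ((_ : (_ : Finset (Fin n)) × Fin n) × Fin n) :=
  (PB F (j+1)).sigma fun q => (pick F q.1 q.2).erase q.2

lemma Tgt_card {τ : ℕ} (hunif : ∀ E ∈ F, E.card = τ + 1) (j : ℕ) :
    (Tgt F j).card = τ * ∑ K ∈ I F (j+1), B F K := by
  rw [Tgt, Finset.card_sigma]
  have hstep : ∀ q ∈ PB F (j+1), ((pick F q.1 q.2).erase q.2).card = τ := by
    rintro ⟨K, x⟩ hq
    simp only [PB, Finset.mem_sigma, mem_bext] at hq
    obtain ⟨hK, hx, hni⟩ := hq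
    have hKi : Ind F K := ((mem_I F).1 hK).2
    rw [Finset.card_erase_of_mem (x_mem_pick F hKi hni), hunif _ (pick_spec F hni).1]
    omega
  rw [Finset.sum_congr rfl hstep, Finset.sum_const, smul_eq_mul, ← PB_card]
  ring

lemma TTbad_card_le {τ : ℕ} (hunif : ∀ E ∈ F, E.card = τ + 1) (j : ℕ) :
    (TTbad F j).card ≤ τ * ∑ K ∈ I F (j+1), B F K := by
  rw [← Tgt_card F hunif j]
  apply Finset.card_le_card_of_injOn
    (fun p => (⟨⟨insert p.2.2 p.1, p.2.1⟩, p.2.2⟩ : (_ : (_ : Finset (Fin n)) × Fin n) × Fin n))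
  · rintro ⟨J, x, z⟩ hp
    simp only [TTbad, Finset.mem_coe, Finset.mem_filter, mem_TT, mem_ext] at hp
    obtain ⟨⟨hJ, ⟨hxJ, hxi⟩, ⟨hzJ, hzi⟩, hxz⟩, hni⟩ := hp
    obtain ⟨hJc, hJi⟩ := (mem_I F).1 hJ
    have hKmem : insert z J ∈ I F (j+1) :=
      (mem_I F).2 ⟨by rw [Finset.card_insert_of_notMem hzJ, hJc], hzi⟩
    have hxK : x ∉ insert z J := by simp [Finset.mem_insert, hxz, hxJ]
    have hni' : ¬ Ind F (insert x (insert z J)) := hni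
    simp only [Tgt, Finset.mem_coe, Finset.mem_sigma, PB, mem_bext]
    refine ⟨⟨hKmem, hxK, hni'⟩, ?_⟩
    rw [Finset.mem_erase]
    refine ⟨fun h => hxz h.symm, ?_⟩
    by_contra hznotin
    have hsub : pick F (insert z J) x ⊆ (insert x (insert z J)).erase z := by
      rw [Finset.subset_erase]
      exact ⟨(pick_spec F hni').2, hznotin⟩
    rw [Finset.erase_insert_of_ne hxz, Finset.erase_insert hzJ] at hsub
    exact hxi _ (pick_spec F hni').1 hsub
  · rintro ⟨J, x, z⟩ hp ⟨J', x', z'⟩ hp' h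
    simp only [Finset.coe_mem, TTbad, Finset.mem_coe, Finset.mem_filter, mem_TT, mem_ext] at hp hp'
    simp only [Sigma.mk.inj_iff, heq_iff_eq] at h
    obtain ⟨⟨hK, hx⟩, hz⟩ := h
    subst hx; subst hz
    have hJJ : J = J' := by
      have e1 : (insert z J).erase z = J := Finset.erase_insert hp.1.2.2.1.1
      have e2 : (insert z J').erase z = J' := Finset.erase_insert hp'.1.2.2.1.1
      rw [← e1, ← e2, hK]
    subst hJJ; rfl

lemma sum_D (j : ℕ) : ∑ J ∈ I F j, D F J = (j + 1) * c F (j + 1) := by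
  have h1 : ∑ J ∈ I F j, D F J = ((I F j).sigma fun J => ext F J).card :=
    (Finset.card_sigma _ _).symm
  have h2 : ((I F (j+1)).sigma fun W => W).card = (j + 1) * c F (j + 1) := by
    rw [Finset.card_sigma]
    rw [Finset.sum_congr rfl (fun W hW => ((mem_I F).1 hW).1)]
    simp [c, mul_comm]
  rw [h1, ← h2]
  apply Finset.card_bij (fun p _ => (⟨insert p.2 p.1, p.2⟩ : (_ : Finset (Fin n)) × Fin n))
  · rintro ⟨J, x⟩ hp
    simp only [Finset.mem_sigma] at hp ⊢
    obtain ⟨hJ, hx⟩ := hp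
    rw [mem_ext] at hx
    obtain ⟨hJc, hJi⟩ := (mem_I F).1 hJ
    exact ⟨(mem_I F).2 ⟨by rw [Finset.card_insert_of_notMem hx.1, hJc], hx.2⟩,
      Finset.mem_insert_self _ _⟩
  · rintro ⟨J, x⟩ hp ⟨J', x'⟩ hp' h
    simp only [Finset.mem_sigma, mem_ext] at hp hp'
    obtain ⟨h1, h2⟩ := Sigma.mk.inj_iff.1 h
    have hx : x = x' := by simpa using h2
    subst hx
    have : J = J' := by
      have e1 : (insert x J).erase x = J := Finset.erase_insert hp.2.1
      have e2 : (insert x J').erase x = J' := Finset.erase_insert hp'.2.1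
      rw [← e1, ← e2, h1]
    subst this
    rfl
  · rintro ⟨W, x⟩ hp
    simp only [Finset.mem_sigma] at hp
    obtain ⟨hW, hx⟩ := hp
    obtain ⟨hWc, hWi⟩ := (mem_I F).1 hW
    refine ⟨⟨W.erase x, x⟩, ?_, ?_⟩
    · simp only [Finset.mem_sigma]
      constructor
      · exact (mem_I F).2 ⟨by rw [Finset.card_erase_of_mem hx, hWc]; rfl,
          Ind.mono F (Finset.erase_subset _ _) hWi⟩
      · rw [mem_ext]
        exact ⟨Finset.notMem_erase _ _, by rwa [Finset.insert_erase hx]⟩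
    · simp [Finset.insert_erase hx]

lemma D_add_B {j : ℕ} {J : Finset (Fin n)} (hJ : J ∈ I F j) :
    D F J + B F J = n - j := by
  have hJc : J.card = j := by
    have := hJ
    simp only [I, Finset.mem_filter, Finset.mem_powersetCard] at this
    exact this.1.2
  have := Finset.card_filter_add_card_filter_not (s := univ \ J)
    (p := fun x => Ind F (insert x J))
  rw [D, B, ext, bext]
  rw [this, Finset.card_sdiff_of_subset (subset_univ _), Finset.card_univ, Fintype.card_fin, hJc]

lemma sum_D_add_B (j : ℕ) :
    ∑ J ∈ I F j, D F J + ∑ J ∈ I F j, B F J = (n - j) * c F j := by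
  rw [← Finset.sum_add_distrib]
  rw [Finset.sum_congr rfl (fun J hJ => D_add_B F hJ)]
  simp [c, mul_comm]

lemma TT_card_add (j : ℕ) :
    (TT F j).card + ∑ J ∈ I F j, D F J = ∑ J ∈ I F j, D F J * D F J := by
  rw [TT, Finset.card_sigma, ← Finset.sum_add_distrib]
  apply Finset.sum_congr rfl
  intro J _
  rw [Finset.offDiag_card]
  have hD : D F J = (ext F J).card := rfl
  rw [← hD]
  have : D F J ≤ D F J * D F J := by
    rcases Nat.eq_zero_or_pos (D F J) with h | h
    · simp [h]
    · exact Nat.le_mul_of_pos_left _ h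
  omega

lemma TT_split (j : ℕ) : (TTgood F j).card + (TTbad F j).card = (TT F j).card :=
  Finset.card_filter_add_card_filter_not _



lemma sum_sq_D (j : ℕ) :
    ∑ J ∈ I F j, (D F J) ^ 2 =
      (TTgood F j).card + (TTbad F j).card + (j + 1) * c F (j + 1) := by
  have h1 := TT_card_add F j
  have h2 := TT_split F j
  have h3 := sum_D F j
  have h4 : ∑ J ∈ I F j, (D F J) ^ 2 = ∑ J ∈ I F j, D F J * D F J := by
    apply Finset.sum_congr rfl; intro J _; ring
  omega

lemma key_nat {τ : ℕ} (hunif : ∀ E ∈ F, E.card = τ + 1) (j : ℕ) :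
    ((j + 1) * c F (j + 1)) ^ 2 ≤
      c F j * ((j + 1) * c F (j + 1) + (j + 2) * (j + 1) * c F (j + 2)
        + τ * ∑ K ∈ I F (j + 1), B F K) := by
  have hCS : (∑ J ∈ I F j, D F J) ^ 2 ≤ c F j * ∑ J ∈ I F j, (D F J) ^ 2 := by
    have := Finset.sum_mul_sq_le_sq_mul_sq (I F j) (fun _ => (1 : ℕ)) (fun J => D F J)
    simpa [c] using this
  rw [sum_D F j] at hCS
  refine hCS.trans (Nat.mul_le_mul_left _ ?_)
  rw [sum_sq_D F j]
  have hb := TTbad_card_le F hunif j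
  have hg := TTgood_card F j
  omega

lemma sum_B_eq (j : ℕ) (hjn : j + 1 ≤ n) :
    (j + 2) * c F (j + 2) + ∑ K ∈ I F (j + 1), B F K = (n - (j + 1)) * c F (j + 1) := by
  have h1 := sum_D_add_B F (j + 1)
  have h2 := sum_D F (j + 1)
  simp only [show j + 1 + 1 = j + 2 from rfl] at h2
  omega

lemma c_tau {τ : ℕ} (hunif : ∀ E ∈ F, E.card = τ + 1) (hτn : τ ≤ n) :
    c F τ = n.choose τ := by
  have : I F τ = univ.powersetCard τ := by
    apply Finset.filter_true_of_mem
    intro A hA E hE hEA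
    have h1 : E.card ≤ A.card := Finset.card_le_card hEA
    rw [hunif E hE, (Finset.mem_powersetCard.1 hA).2] at h1
    omega
  rw [c, this, Finset.card_powersetCard, Finset.card_univ, Fintype.card_fin]

lemma F_sub {τ : ℕ} (hunif : ∀ E ∈ F, E.card = τ + 1) :
    F ⊆ univ.powersetCard (τ + 1) := by
  intro E hE
  exact Finset.mem_powersetCard.2 ⟨Finset.subset_univ _, hunif E hE⟩

lemma c_tau_succ {τ : ℕ} (hunif : ∀ E ∈ F, E.card = τ + 1) :
    c F (τ + 1) = n.choose (τ + 1) - F.card := by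
  have hI : I F (τ + 1) = univ.powersetCard (τ + 1) \ F := by
    ext A
    simp only [mem_I, Finset.mem_sdiff, Finset.mem_powersetCard, subset_univ, true_and]
    constructor
    · rintro ⟨hc, hind⟩
      exact ⟨hc, fun hA => hind A hA (Finset.Subset.refl A)⟩
    · rintro ⟨hc, hA⟩
      refine ⟨hc, fun E hE hEA => hA ?_⟩
      have : E = A := Finset.eq_of_subset_of_card_le hEA (by rw [hunif E hE, hc])
      rwa [this] at hE
  rw [c, hI, Finset.card_sdiff_of_subset (F_sub F hunif), Finset.card_powersetCard,
    Finset.card_univ, Fintype.card_fin]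

lemma c_top {lam : ℕ} (hcov : ∀ A : Finset (Fin n), A.card = lam + 1 → ∃ E ∈ F, E ⊆ A) :
    c F (lam + 1) = 0 := by
  rw [c, Finset.card_eq_zero]
  ext A
  simp only [mem_I, Finset.notMem_empty, iff_false, not_and]
  intro hc hind
  obtain ⟨E, hE, hEA⟩ := hcov A hc
  exact hind E hE hEA

/-- de Caen's lower bound for Turán numbers. -/
theorem deCaen {τ lam : ℕ} (hτl : τ ≤ lam) (hln : lam + 1 ≤ n)
    (hunif : ∀ E ∈ F, E.card = τ + 1)
    (hcov : ∀ A : Finset (Fin n), A.card = lam + 1 → ∃ E ∈ F, E ⊆ A) :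
    ((n - lam : ℕ) : ℚ) * (n.choose (τ + 1)) ≤
      (F.card : ℚ) * ((n - τ : ℕ)) * (lam.choose τ) := by
  by_contra hcon
  push_neg at hcon
  have hτn1 : τ + 1 ≤ n := le_trans (by omega) hln
  have hC : (0 : ℚ) < (n.choose (τ + 1) : ℚ) := by
    exact_mod_cast Nat.choose_pos hτn1
  set m : ℚ := (F.card : ℚ) with hm
  have hm0 : 0 ≤ m := by positivity
  set q : ℚ := m * ((n - τ : ℕ) : ℚ) / (n.choose (τ + 1)) with hq
  have hq0 : 0 ≤ q := by positivity
  set ψ : ℕ → ℚ := fun j => ((n : ℚ) - j) - q * (j.choose τ) with hψ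
  have hqlam : q * (lam.choose τ) < ((n - lam : ℕ) : ℚ) := by
    rw [hq, div_mul_eq_mul_div, div_lt_iff₀ hC]
    calc m * ((n - τ : ℕ) : ℚ) * (lam.choose τ) = m * ((n - τ : ℕ) : ℚ) * (lam.choose τ) := rfl
    _ < ((n - lam : ℕ) : ℚ) * (n.choose (τ + 1)) := hcon
  have hψpos : ∀ j ≤ lam, 0 < ψ j := by
    intro j hj
    have h1 : q * (j.choose τ) ≤ q * (lam.choose τ) :=
      mul_le_mul_of_nonneg_left (by exact_mod_cast Nat.choose_le_choose τ hj) hq0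
    have h2 : ((n - lam : ℕ) : ℚ) ≤ (n : ℚ) - j := by
      have : ((n - lam : ℕ) : ℚ) = (n : ℚ) - lam := by
        rw [Nat.cast_sub (by omega)]
      rw [this]
      have : (j : ℚ) ≤ (lam : ℚ) := by exact_mod_cast hj
      linarith
    simp only [hψ]
    linarith [lt_of_le_of_lt h1 hqlam]
  -- the inductive invariant
  have main : ∀ j, τ ≤ j → j ≤ lam →
      0 < (c F j : ℚ) ∧ ψ j * c F j ≤ ((j : ℚ) + 1) * c F (j + 1) := by
    intro j hj
    induction j, hj using Nat.le_induction with
    | base =>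
      intro _
      have hτn : τ ≤ n := by omega
      have hcτ : (c F τ : ℚ) = (n.choose τ : ℚ) := by
        rw [c_tau F hunif hτn]
      have hle : F.card ≤ n.choose (τ + 1) := by
        calc F.card ≤ (univ.powersetCard (τ + 1) : Finset (Finset (Fin n))).card :=
              Finset.card_le_card (F_sub F hunif)
          _ = n.choose (τ + 1) := by
              rw [Finset.card_powersetCard, Finset.card_univ, Fintype.card_fin]
      have hcτ1 : (c F (τ + 1) : ℚ) = (n.choose (τ + 1) : ℚ) - m := by
        rw [c_tau_succ F hunif, hm]
        push_cast [Nat.cast_sub hle]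
        ring
      have hpos : (0 : ℚ) < c F τ := by
        rw [hcτ]
        exact_mod_cast Nat.choose_pos hτn
      refine ⟨hpos, ?_⟩
      have hid : ((n.choose (τ + 1) : ℚ)) * ((τ : ℚ) + 1) = (n.choose τ : ℚ) * ((n : ℚ) - τ) := by
        have h0 := Nat.choose_succ_right_eq n τ
        have h1 := congrArg (fun x : ℕ => (x : ℚ)) h0
        push_cast [Nat.cast_sub hτn] at h1
        linarith
      have hcast : ((n - τ : ℕ) : ℚ) = (n : ℚ) - τ := by
        rw [Nat.cast_sub hτn]
      have e1 : q * ((n.choose τ : ℚ)) = m * ((τ : ℚ) + 1) := by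
        rw [hq, hcast, div_mul_eq_mul_div, div_eq_iff hC.ne']
        linear_combination (-m) * hid
      have heq : ψ τ * (c F τ : ℚ) = ((τ : ℚ) + 1) * (c F (τ + 1) : ℚ) := by
        rw [hcτ, hcτ1]
        simp only [hψ, Nat.choose_self, Nat.cast_one, mul_one]
        linear_combination (-1 : ℚ) * hid - e1
      exact le_of_eq heq
    | succ j hj IH =>
      intro hjl
      have hjlam : j ≤ lam := by omega
      obtain ⟨hc0, hIH⟩ := IH hjlam
      have hψj : 0 < ψ j := hψpos j hjlam
      have hc1 : 0 < (c F (j + 1) : ℚ) := by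
        have h1 : (0 : ℚ) < ψ j * c F j := mul_pos hψj hc0
        have h2 := lt_of_lt_of_le h1 hIH
        by_contra hcc
        push_neg at hcc
        have : ((c F (j + 1) : ℚ)) = 0 := le_antisymm hcc (by positivity)
        rw [this, mul_zero] at h2
        exact lt_irrefl _ h2
      have hc2nn : (0 : ℚ) ≤ (c F (j + 2) : ℚ) := by positivity
      set SBn : ℕ := ∑ K ∈ I F (j + 1), B F K with hSBn
      have hkey := key_nat F hunif j
      have hkQ : (((j : ℚ) + 1) * (c F (j + 1) : ℚ)) ^ 2 ≤
          (c F j : ℚ) * (((j : ℚ) + 1) * c F (j + 1)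
            + ((j : ℚ) + 2) * ((j : ℚ) + 1) * c F (j + 2) + (τ : ℚ) * (SBn : ℚ)) := by
        exact_mod_cast hkey
      have hSB : (SBn : ℚ) = ((n : ℚ) - ((j : ℚ) + 1)) * c F (j + 1)
          - ((j : ℚ) + 2) * c F (j + 2) := by
        have h0 := sum_B_eq F j (by omega : j + 1 ≤ n)
        have h1 := congrArg (fun x : ℕ => (x : ℚ)) h0
        push_cast [Nat.cast_sub (show j + 1 ≤ n by omega)] at h1
        rw [hSBn]
        push_cast
        linarith
      rw [hSB] at hkQ
      -- multiply IH and divide by c j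
      have hA : (ψ j * (c F j : ℚ)) * (((j : ℚ) + 1) * c F (j + 1)) ≤
          (((j : ℚ) + 1) * (c F (j + 1) : ℚ)) ^ 2 := by
        have hnn : (0 : ℚ) ≤ ((j : ℚ) + 1) * c F (j + 1) := by positivity
        calc (ψ j * (c F j : ℚ)) * (((j : ℚ) + 1) * c F (j + 1))
            ≤ (((j : ℚ) + 1) * c F (j + 1)) * (((j : ℚ) + 1) * c F (j + 1)) :=
              mul_le_mul_of_nonneg_right hIH hnn
          _ = (((j : ℚ) + 1) * (c F (j + 1) : ℚ)) ^ 2 := by ring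
      have hS : ((j : ℚ) + 1) * (c F (j + 1) : ℚ) * ψ j ≤
          ((j : ℚ) + 1) * c F (j + 1) + ((j : ℚ) + 2) * ((j : ℚ) + 1) * c F (j + 2)
            + (τ : ℚ) * (((n : ℚ) - ((j : ℚ) + 1)) * c F (j + 1)
              - ((j : ℚ) + 2) * c F (j + 2)) := by
        have hcomb := hA.trans hkQ
        have hrw : (ψ j * (c F j : ℚ)) * (((j : ℚ) + 1) * c F (j + 1)) =
            (c F j : ℚ) * (((j : ℚ) + 1) * (c F (j + 1) : ℚ) * ψ j) := by ring
        rw [hrw] at hcomb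
        exact le_of_mul_le_mul_left hcomb hc0
      -- choose identity
      have hcho : ((j.choose τ : ℚ)) * ((j : ℚ) + 1) =
          (((j + 1).choose τ : ℚ)) * ((j : ℚ) + 1 - τ) := by
        have h0 := Nat.choose_mul_succ_eq j τ
        have h1 := congrArg (fun x : ℕ => (x : ℚ)) h0
        push_cast [Nat.cast_sub (show τ ≤ j + 1 by omega)] at h1
        linarith
      have hiden : ((j : ℚ) + 1) * ψ j - ((j : ℚ) + 1) - (τ : ℚ) * ((n : ℚ) - ((j : ℚ) + 1))
          = ((j : ℚ) + 1 - (τ : ℚ)) * ψ (j + 1) := by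
        simp only [hψ]
        push_cast
        linear_combination (-q) * hcho
      have hjτ : (0 : ℚ) < (j : ℚ) + 1 - τ := by
        have : (τ : ℚ) ≤ (j : ℚ) := by exact_mod_cast hj
        linarith
      have hring : ((j : ℚ) + 1 - τ) * (ψ (j + 1) * c F (j + 1))
            - ((j : ℚ) + 1 - τ) * (((j : ℚ) + 2) * c F (j + 2))
          = ((j : ℚ) + 1) * (c F (j + 1) : ℚ) * ψ j
            - (((j : ℚ) + 1) * c F (j + 1) + ((j : ℚ) + 2) * ((j : ℚ) + 1) * c F (j + 2)
              + (τ : ℚ) * (((n : ℚ) - ((j : ℚ) + 1)) * c F (j + 1)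
                - ((j : ℚ) + 2) * c F (j + 2))) := by
        linear_combination (-(c F (j + 1) : ℚ)) * hiden
      have H1 : ((j : ℚ) + 1 - τ) * (ψ (j + 1) * c F (j + 1)) ≤
          ((j : ℚ) + 1 - τ) * (((j : ℚ) + 2) * c F (j + 2)) := by
        linarith [hS, hring]
      have H2 : ψ (j + 1) * c F (j + 1) ≤ ((j : ℚ) + 2) * c F (j + 2) :=
        le_of_mul_le_mul_left (by linarith [H1]) hjτ
      refine ⟨hc1, ?_⟩
      have hidx : j + 1 + 1 = j + 2 := rfl
      rw [hidx]
      push_cast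
      push_cast at H2
      linarith
  -- final contradiction
  obtain ⟨hp, hle⟩ := main lam hτl le_rfl
  have hczero : (c F (lam + 1) : ℚ) = 0 := by
    rw [c_top F hcov]
    norm_num
  rw [hczero, mul_zero] at hle
  have := mul_pos (hψpos lam le_rfl) hp
  linarith

end DC4

section Defs

variable {α : Type*} [Fintype α] [DecidableEq α]

/-- A set `H` crosses a partition `P` of the vertex set if it meets
exactly `min (|H|, number of classes)` classes. -/
def Crosses (H : Finset α) (P : Finpartition (univ : Finset α)) : Prop :=
  (P.parts.filter fun c => (c ∩ H).Nonempty).card = min H.card P.parts.card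

/-- A set system crosses a partition if at least one of its members does. -/
def SysCrosses (𝓗 : Finset (Finset α)) (P : Finpartition (univ : Finset α)) : Prop :=
  ∃ H ∈ 𝓗, Crosses H P

/-- `𝓗` crosses every partition of the vertex set into exactly `k` nonempty classes. -/
def CrossesAllPartitions (𝓗 : Finset (Finset α)) (k : ℕ) : Prop :=
  ∀ P : Finpartition (univ : Finset α), P.parts.card = k → SysCrosses 𝓗 P

/-- `f n k r`: the minimum number of edges in an `r`-uniform hypergraph on an
`n`-element vertex set crossing all `k`-partitions. -/
noncomputable def f (n k r : ℕ) : ℕ :=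
  sInf { m | ∃ 𝓗 : Finset (Finset (Fin n)),
    (∀ H ∈ 𝓗, H.card = r) ∧ CrossesAllPartitions 𝓗 k ∧ 𝓗.card = m }

end Defs

section Reduction

variable {n : ℕ}

/-- The partition of `Fin n` into `univ \ Y` and singletons from `Y`. -/
def bigPartition (Y : Finset (Fin n)) (hY : (univ \ Y).Nonempty) :
    Finpartition (univ : Finset (Fin n)) where
  parts := insert (univ \ Y) (Y.image fun y => {y})
  supIndep := by
    rw [Finset.supIndep_iff_pairwiseDisjoint]
    intro a ha b hb hab
    simp only [Finset.coe_insert, Set.mem_insert_iff, Finset.coe_image, Set.mem_image,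
      Finset.mem_coe] at ha hb
    simp only [Function.onFun, id_eq]
    rw [Finset.disjoint_left]
    intro x hxa hxb
    rcases ha with rfl | ⟨y, hy, rfl⟩
    · rcases hb with rfl | ⟨z, hz, rfl⟩
      · exact hab rfl
      · rw [Finset.mem_singleton] at hxb
        subst hxb
        exact (Finset.mem_sdiff.1 hxa).2 hz
    · rcases hb with rfl | ⟨z, hz, rfl⟩
      · rw [Finset.mem_singleton] at hxa
        subst hxa
        exact (Finset.mem_sdiff.1 hxb).2 hy
      · rw [Finset.mem_singleton] at hxa hxb
        exact hab (by rw [← hxa, ← hxb])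
  sup_parts := by
    apply le_antisymm
    · apply Finset.sup_le
      intro c hc
      exact fun x _ => Finset.mem_univ x
    · intro x _
      rw [Finset.mem_sup]
      by_cases hx : x ∈ Y
      · exact ⟨{x}, Finset.mem_insert_of_mem (Finset.mem_image_of_mem _ hx),
          Finset.mem_singleton_self x⟩
      · exact ⟨univ \ Y, Finset.mem_insert_self _ _,
          Finset.mem_sdiff.2 ⟨Finset.mem_univ x, hx⟩⟩
  bot_notMem := by
    simp only [Finset.bot_eq_empty, Finset.mem_insert, Finset.mem_image]
    rintro (h | ⟨y, hy, h⟩)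
    · rw [← h] at hY
      exact Finset.not_nonempty_empty hY
    · exact Finset.singleton_ne_empty y h

lemma bigPartition_not_mem (Y : Finset (Fin n)) :
    univ \ Y ∉ Y.image (fun y => ({y} : Finset (Fin n))) := by
  intro h
  obtain ⟨y, hy, hEq⟩ := Finset.mem_image.1 h
  have : y ∈ univ \ Y := by rw [← hEq]; exact Finset.mem_singleton_self y
  exact (Finset.mem_sdiff.1 this).2 hy

lemma bigPartition_parts_card (Y : Finset (Fin n)) (hY : (univ \ Y).Nonempty) :
    (bigPartition Y hY).parts.card = Y.card + 1 := by
  show (insert (univ \ Y) (Y.image fun y => ({y} : Finset (Fin n)))).card = Y.card + 1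
  rw [Finset.card_insert_of_notMem (bigPartition_not_mem Y),
    Finset.card_image_of_injective _ Finset.singleton_injective]

/-- From a crossing of a big partition, extract an edge meeting `Y` in ≥ r-1 points. -/
lemma crossing_meets (Y : Finset (Fin n)) (hY : (univ \ Y).Nonempty)
    {H : Finset (Fin n)} {r : ℕ} (hHr : H.card = r)
    (hcross : Crosses H (bigPartition Y hY)) (hrk : r ≤ Y.card + 1) :
    r ≤ (H ∩ Y).card + 1 := by
  unfold Crosses at hcross
  rw [hHr, bigPartition_parts_card Y hY, min_eq_left hrk] at hcross
  have hsub : ((bigPartition Y hY).parts.filter fun c => (c ∩ H).Nonempty) ⊆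
      insert (univ \ Y) ((H ∩ Y).image fun y => {y}) := by
    intro c hc
    obtain ⟨hcp, hcH⟩ := Finset.mem_filter.1 hc
    have : c ∈ insert (univ \ Y) (Y.image fun y => {y}) := hcp
    rcases Finset.mem_insert.1 this with h | h
    · exact h ▸ Finset.mem_insert_self _ _
    · obtain ⟨y, hy, rfl⟩ := Finset.mem_image.1 h
      obtain ⟨x, hx⟩ := hcH
      rw [Finset.mem_inter, Finset.mem_singleton] at hx
      apply Finset.mem_insert_of_mem
      exact Finset.mem_image_of_mem _ (Finset.mem_inter.2 ⟨hx.1 ▸ hx.2, hy⟩)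
  have hcard := Finset.card_le_card hsub
  rw [hcross] at hcard
  calc r ≤ (insert (univ \ Y) ((H ∩ Y).image fun y => ({y} : Finset (Fin n)))).card := hcard
    _ ≤ ((H ∩ Y).image fun y => ({y} : Finset (Fin n))).card + 1 := Finset.card_insert_le _ _
    _ ≤ (H ∩ Y).card + 1 := by
        exact Nat.add_le_add_right (Finset.card_image_le) 1

end Reduction

section Final

lemma complete_crosses (n k r : ℕ) (hrk : r ≤ k) :
    CrossesAllPartitions (Finset.powersetCard r (univ : Finset (Fin n))) k := by
  intro P hP
  have hrP : r ≤ P.parts.card := by rw [hP]; exact hrk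
  obtain ⟨T, hTsub, hTcard⟩ := Finset.exists_subset_card_eq hrP
  set H : Finset (Fin n) := T.attach.image
    (fun c => (P.nonempty_of_mem_parts (hTsub c.2)).choose) with hH
  have hrep : ∀ c : {x // x ∈ T},
      (P.nonempty_of_mem_parts (hTsub c.2)).choose ∈ (c : Finset (Fin n)) :=
    fun c => (P.nonempty_of_mem_parts (hTsub c.2)).choose_spec
  have hinj : Function.Injective
      (fun c : {x // x ∈ T} => (P.nonempty_of_mem_parts (hTsub c.2)).choose) := by
    intro c d h
    dsimp only at h
    by_contra hcd
    have hne : (c : Finset (Fin n)) ≠ (d : Finset (Fin n)) :=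
      fun hEq => hcd (Subtype.ext hEq)
    have hdisj := P.disjoint (hTsub c.2) (hTsub d.2) hne
    have h1 := hrep c
    have h2 := hrep d
    rw [h] at h1
    exact (Finset.disjoint_left.1 hdisj) h1 h2
  have hHcard : H.card = r := by
    rw [hH, Finset.card_image_of_injective _ hinj, Finset.card_attach, hTcard]
  refine ⟨H, Finset.mem_powersetCard.2 ⟨Finset.subset_univ _, hHcard⟩, ?_⟩
  unfold Crosses
  rw [hHcard, hP, min_eq_left hrk]
  have hfilter : (P.parts.filter fun c => (c ∩ H).Nonempty) = T := by
    ext c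
    simp only [Finset.mem_filter]
    constructor
    · rintro ⟨hcP, x, hx⟩
      rw [Finset.mem_inter] at hx
      obtain ⟨hxc, hxH⟩ := hx
      rw [hH] at hxH
      obtain ⟨d, _, hdx⟩ := Finset.mem_image.1 hxH
      have hxd : x ∈ (d : Finset (Fin n)) := by rw [← hdx]; exact hrep d
      have hcd : c = (d : Finset (Fin n)) := by
        by_contra hne
        exact (Finset.disjoint_left.1 (P.disjoint hcP (hTsub d.2) hne)) hxc hxd
      rw [hcd]
      exact d.2
    · intro hcT
      refine ⟨hTsub hcT, ⟨(P.nonempty_of_mem_parts (hTsub hcT)).choose,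
        Finset.mem_inter.2 ⟨(P.nonempty_of_mem_parts (hTsub hcT)).choose_spec, ?_⟩⟩⟩
      rw [hH]
      exact Finset.mem_image.2 ⟨⟨c, hcT⟩, Finset.mem_attach _ _, rfl⟩
  rw [hfilter, hTcard]

lemma f_set_nonempty (n k r : ℕ) (hrk : r ≤ k) :
    { m | ∃ 𝓗 : Finset (Finset (Fin n)),
      (∀ H ∈ 𝓗, H.card = r) ∧ CrossesAllPartitions 𝓗 k ∧ 𝓗.card = m }.Nonempty :=
  ⟨_, Finset.powersetCard r (univ : Finset (Fin n)),
    fun _ hH => (Finset.mem_powersetCard.1 hH).2, complete_crosses n k r hrk, rfl⟩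

/-- main lower bound, in product form over ℕ-casts -/
lemma main_bound {n k r : ℕ} (hr : 2 ≤ r) (hrk : r ≤ k) (hkn : k ≤ n)
    (𝓗 : Finset (Finset (Fin n))) (hunif : ∀ H ∈ 𝓗, H.card = r)
    (hcross : CrossesAllPartitions 𝓗 k) :
    ((n - k + 2 : ℕ) : ℚ) * (n.choose (r - 1)) ≤
      ((r : ℚ) * 𝓗.card) * ((n - r + 2 : ℕ)) * ((k - 2).choose (r - 2)) := by
  classical
  set 𝓖 : Finset (Finset (Fin n)) := 𝓗.biUnion (fun H => Finset.powersetCard (r-1) H) with hG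
  have hGunif : ∀ E ∈ 𝓖, E.card = (r - 2) + 1 := by
    intro E hE
    rw [hG, Finset.mem_biUnion] at hE
    obtain ⟨H, _, hEH⟩ := hE
    rw [(Finset.mem_powersetCard.1 hEH).2]
    omega
  have hGcard : 𝓖.card ≤ r * 𝓗.card := by
    calc 𝓖.card ≤ ∑ H ∈ 𝓗, (Finset.powersetCard (r-1) H).card := Finset.card_biUnion_le
      _ = ∑ H ∈ 𝓗, r := by
          apply Finset.sum_congr rfl
          intro H hH
          rw [Finset.card_powersetCard, hunif H hH,
            ← Nat.choose_symm (by omega : r - 1 ≤ r),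
            (show r - (r - 1) = 1 by omega), Nat.choose_one_right]
      _ = r * 𝓗.card := by rw [Finset.sum_const, smul_eq_mul, mul_comm]
  have hGcov : ∀ A : Finset (Fin n), A.card = (k - 2) + 1 → ∃ E ∈ 𝓖, E ⊆ A := by
    intro A hA
    have hAcard : A.card = k - 1 := by omega
    have hbig : ((univ : Finset (Fin n)) \ A).Nonempty := by
      rw [← Finset.card_pos, Finset.card_sdiff_of_subset (Finset.subset_univ _), Finset.card_univ,
        Fintype.card_fin, hAcard]
      omega
    obtain ⟨H, hH𝓗, hHcross⟩ := hcross (bigPartition A hbig)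
      (by rw [bigPartition_parts_card A hbig, hAcard]; omega)
    have hmeet := crossing_meets A hbig (hunif H hH𝓗) hHcross (by omega)
    have hle : r - 1 ≤ (H ∩ A).card := by omega
    obtain ⟨S, hSsub, hScard⟩ := Finset.exists_subset_card_eq hle
    refine ⟨S, ?_, hSsub.trans (Finset.inter_subset_right)⟩
    rw [hG, Finset.mem_biUnion]
    exact ⟨H, hH𝓗, Finset.mem_powersetCard.2
      ⟨hSsub.trans (Finset.inter_subset_left), hScard⟩⟩
  have hdc := DC4.deCaen 𝓖 (show r - 2 ≤ k - 2 by omega) (show (k-2) + 1 ≤ n by omega)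
    hGunif hGcov
  have e1 : n - (k - 2) = n - k + 2 := by omega
  have e2 : (r - 2) + 1 = r - 1 := by omega
  have e3 : n - (r - 2) = n - r + 2 := by omega
  rw [e1, e2, e3] at hdc
  refine hdc.trans ?_
  have h1 : (𝓖.card : ℚ) ≤ (r : ℚ) * 𝓗.card := by exact_mod_cast hGcard
  have h2 : (0:ℚ) ≤ ((n - r + 2 : ℕ) : ℚ) := by positivity
  have h3 : (0:ℚ) ≤ ((k-2).choose (r-2) : ℚ) := by positivity
  apply mul_le_mul_of_nonneg_right _ h3
  apply mul_le_mul_of_nonneg_right h1 h2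

end Final

theorem stmt10 (n k r : ℕ) (hr : 2 ≤ r) (hrk : r ≤ k) (hkn : k ≤ n) :
    (f n k r : ℚ) ≥ (n.choose (r - 1) : ℚ) / ((k - 2).choose (r - 2) : ℚ) *
      (((n : ℚ) - k + 2) / ((r : ℚ) * ((n : ℚ) - r + 2))) := by
  obtain ⟨𝓗, hunif, hcross, hcard⟩ := Nat.sInf_mem (f_set_nonempty n k r hrk)
  have hb := main_bound hr hrk hkn 𝓗 hunif hcross
  rw [hcard] at hb
  show _ ≤ _
  unfold f
  have hrn : r ≤ n := hrk.trans hkn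
  have hrQ : (r : ℚ) ≤ (n : ℚ) := by exact_mod_cast hrn
  have hkQ : (k : ℚ) ≤ (n : ℚ) := by exact_mod_cast hkn
  have h5 : (0 : ℚ) < (n : ℚ) - r + 2 := by linarith
  have hCpos : (0 : ℚ) < ((k - 2).choose (r - 2) : ℚ) := by
    exact_mod_cast Nat.choose_pos (by omega : r - 2 ≤ k - 2)
  have hrpos : (0 : ℚ) < (r : ℚ) := by positivity
  have c1 : ((n - k + 2 : ℕ) : ℚ) = (n : ℚ) - k + 2 := by
    push_cast [Nat.cast_sub hkn]
    ring
  have c2 : ((n - r + 2 : ℕ) : ℚ) = (n : ℚ) - r + 2 := by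
    push_cast [Nat.cast_sub hrn]
    ring
  rw [c1, c2] at hb
  rw [div_mul_div_comm, div_le_iff₀ (by positivity)]
  nlinarith [hb, hCpos, h5, hrpos]
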